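/- Let H satisfy the Class 2 conditions with sound-speed constant κ = (3/2)(1 + g'(0)). Then lim_{t→∞} (−H'(t)/H(t)²) = κ. -/

import Mathlib

open Real Filter Set

noncomputable section

/-- The Schwarzschild factor `f(r) = 1 - 2m/r`. -/
def mcf (m r : ℝ) : ℝ := 1 - 2*m/r

/-- Definition 1: expanding McVittie spacetime with a big bang background.
`H` is C² on `(0,∞)`, positive, strictly decreasing (`H' < 0`), and satisfies the
big bang condition `∫_t^{t₀} H → +∞` as `t → 0⁺`. -/
def Def1 (H : ℝ → ℝ) : Prop :=
  ContDiffOn ℝ 2 H (Set.Ioi 0) ∧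
  (∀ t > 0, 0 < H t) ∧
  (∀ t > 0, deriv H t < 0) ∧
  (∀ t₀ > 0, Tendsto (fun t => ∫ u in t..t₀, H u) (nhdsWithin 0 (Set.Ioi 0)) atTop)

/-- The causal geodesic system of the McVittie metric with mass `m`, angular momentum `ℓ`,
causality parameter `ε` (0 for null, -1 for timelike) and Hubble function `H`,
for functions `t, r` with derivatives `t', r'` on a set `D` of parameter values:
the two second order equations, the first integral, and the constraints
`t > 0`, `r > 2m`, `t' > 0`. -/
def IsGeodesic (m ℓ ε : ℝ) (H t r t' r' : ℝ → ℝ) (D : Set ℝ) : Prop :=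
  ∀ s ∈ D,
    0 < t s ∧ 2*m < r s ∧ 0 < t' s ∧
    HasDerivAt t (t' s) s ∧ HasDerivAt r (r' s) s ∧
    HasDerivAt r' (r s * Real.sqrt (mcf m (r s)) * deriv H (t s) * (t' s)^2
        + (1 - 3*m / r s) * ℓ^2 / (r s)^3
        + ε * (m / (r s)^2 - r s * (H (t s))^2)) s ∧
    HasDerivAt t' (-(1 - 3*m / r s) * (Real.sqrt (mcf m (r s)))⁻¹ * H (t s) * (t' s)^2
        - (2*m / (r s)^2) * (mcf m (r s))⁻¹ * t' s * r' s
        - ε * (Real.sqrt (mcf m (r s)))⁻¹ * H (t s)) s ∧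
    (-(mcf m (r s) - (r s)^2 * (H (t s))^2) * (t' s)^2
        - 2 * r s * (Real.sqrt (mcf m (r s)))⁻¹ * H (t s) * t' s * r' s
        + (mcf m (r s))⁻¹ * (r' s)^2 + ℓ^2 / (r s)^2 = ε)

/-- Domain `[0, sω)` of a future-directed geodesic, with `sω` a possibly infinite endpoint. -/
def GeoDomF (sω : EReal) : Set ℝ := {s : ℝ | 0 ≤ s ∧ (s : EReal) < sω}

/-- A geodesic on its right-maximal interval of existence `[0, sω)`:
a solution which admits no extension to any strictly larger interval `[0, sω₂)`. -/
def MaxFutureGeodesic (m ℓ ε : ℝ) (H t r t' r' : ℝ → ℝ) (sω : EReal) : Prop :=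
  0 < sω ∧ IsGeodesic m ℓ ε H t r t' r' (GeoDomF sω) ∧
  ¬ ∃ (sω₂ : EReal) (t₂ r₂ t₂' r₂' : ℝ → ℝ), sω < sω₂ ∧
      IsGeodesic m ℓ ε H t₂ r₂ t₂' r₂' (GeoDomF sω₂) ∧
      ∀ s ∈ GeoDomF sω, t₂ s = t s ∧ r₂ s = r s ∧ t₂' s = t' s ∧ r₂' s = r' s

/-- Class 1 conditions: Definition 1 together with `H → H₀ > 0`, `H' → 0`, `H'' → 0`
at late times, a C¹ equation of state `p₀ = g(ρ₀)` (with cosmological constant `Λ = 3H₀²`)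
with sound-speed constant `κ = (3/2)(1 + g'(0)) > 0`, and the horizon existence condition
`m·H₀ < 1/(3√3)`. -/
def Class1 (m H₀ κ : ℝ) (H g : ℝ → ℝ) : Prop :=
  Def1 H ∧ 0 < H₀ ∧
  Tendsto H atTop (nhds H₀) ∧
  Tendsto (deriv H) atTop (nhds 0) ∧
  Tendsto (deriv (deriv H)) atTop (nhds 0) ∧
  ContDiffOn ℝ 1 g (Set.Ici 0) ∧
  (∀ t > 0, (-2 * deriv H t - 3 * (H t)^2 + 3*H₀^2) / (8*π)
      = g ((3*(H t)^2 - 3*H₀^2) / (8*π))) ∧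
  κ = 3/2 * (1 + derivWithin g (Set.Ici 0) 0) ∧ 0 < κ ∧
  m * H₀ < 1 / (3*Real.sqrt 3)

/-- Class 2 conditions: Definition 1 together with `H → 0`, `H' → 0`, `H'' → 0`
at late times and a C² equation of state `p₀ = g(ρ₀)` (with `Λ = 0`)
with sound-speed constant `κ = (3/2)(1 + g'(0)) > 0`. -/
def Class2 (κ : ℝ) (H g : ℝ → ℝ) : Prop :=
  Def1 H ∧
  Tendsto H atTop (nhds 0) ∧
  Tendsto (deriv H) atTop (nhds 0) ∧
  Tendsto (deriv (deriv H)) atTop (nhds 0) ∧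
  ContDiffOn ℝ 2 g (Set.Ici 0) ∧
  (∀ t > 0, (-2 * deriv H t - 3 * (H t)^2) / (8*π) = g ((3*(H t)^2) / (8*π))) ∧
  κ = 3/2 * (1 + derivWithin g (Set.Ici 0) 0) ∧ 0 < κ

/-- `R` solves the ingoing radial null geodesic equation
`dr/dt = r·H(t)·√(1 − 2m/r) − (1 − 2m/r)` on `D`, staying in `r > 2m`. -/
def SolvesIRNG (m : ℝ) (H R : ℝ → ℝ) (D : Set ℝ) : Prop :=
  ∀ u ∈ D, 2*m < R u ∧
    HasDerivAt R (R u * H u * Real.sqrt (1 - 2*m / R u) - (1 - 2*m / R u)) u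

/-- `R` solves the outgoing radial null geodesic equation
`dr/dt = r·H(t)·√(1 − 2m/r) + (1 − 2m/r)` on `D`, staying in `r > 2m`. -/
def SolvesORNG (m : ℝ) (H R : ℝ → ℝ) (D : Set ℝ) : Prop :=
  ∀ u ∈ D, 2*m < R u ∧
    HasDerivAt R (R u * H u * Real.sqrt (1 - 2*m / R u) + (1 - 2*m / R u)) u

/-- The ingoing condition `f(r)·r' = (r·f(r)^{−1/2}·H(t) − 1)·f(r)·t'` along a null geodesic. -/
def IngoingOn (m : ℝ) (H t r t' r' : ℝ → ℝ) (D : Set ℝ) : Prop :=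
  ∀ s ∈ D, mcf m (r s) * r' s
    = (r s * (Real.sqrt (mcf m (r s)))⁻¹ * H (t s) - 1) * mcf m (r s) * t' s

/-- The outgoing condition `f(r)⁻¹·r' = (r·f(r)^{−1/2}·H(t) + 1)·t'` along a null geodesic. -/
def OutgoingOn (m : ℝ) (H t r t' r' : ℝ → ℝ) (D : Set ℝ) : Prop :=
  ∀ s ∈ D, (mcf m (r s))⁻¹ * r' s
    = (r s * (Real.sqrt (mcf m (r s)))⁻¹ * H (t s) + 1) * t' s

/-- The point `(t, r)` lies in the anti-trapped region: `r > 2m` and `H(t) > (1/r)√(1 − 2m/r)`. -/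
def AntiTrapped (m : ℝ) (H : ℝ → ℝ) (u rr : ℝ) : Prop :=
  2*m < rr ∧ 1 / rr * Real.sqrt (1 - 2*m/rr) < H u

/-! Writing `ρ₀ = 3H²/(8π)` and `p₀ = (−2H' − 3H²)/(8π)`, one has the identity
`−H'/H² = (3/2)(1 + p₀/ρ₀)`. As `t → ∞`, `ρ₀ → 0⁺` and `p₀ → 0`, so the equation of state
`p₀ = g(ρ₀)` forces `g 0 = 0`, and then `p₀/ρ₀ = g(ρ₀)/ρ₀` is a difference quotient of `g`
at `0`, which tends to `g'(0)`. -/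

open Topology

def backgroundDensity (H : ℝ → ℝ) (t : ℝ) : ℝ := 3 * H t ^ 2 / (8 * π)

def backgroundPressure (H : ℝ → ℝ) (t : ℝ) : ℝ := (-2 * deriv H t - 3 * H t ^ 2) / (8 * π)

lemma neg_deriv_div_sq_eq {H : ℝ → ℝ} {t : ℝ} (ht : H t ≠ 0) :
    -deriv H t / H t ^ 2 = 3 / 2 * (1 + backgroundPressure H t / backgroundDensity H t) := by
  unfold backgroundPressure backgroundDensity
  field_simp
  ring

lemma tendsto_backgroundDensity {H : ℝ → ℝ} (hpos : ∀ t > 0, 0 < H t)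
    (hH : Tendsto H atTop (𝓝 0)) :
    Tendsto (backgroundDensity H) atTop (𝓝[>] 0) := by
  refine tendsto_nhdsWithin_iff.mpr ⟨?_, ?_⟩
  · unfold backgroundDensity
    simpa using ((hH.pow 2).const_mul 3).div_const (8 * π)
  · filter_upwards [eventually_gt_atTop 0] with t ht
    have := hpos t ht
    rw [mem_Ioi, backgroundDensity]
    positivity

lemma tendsto_backgroundPressure {H : ℝ → ℝ} (hH : Tendsto H atTop (𝓝 0))
    (hH' : Tendsto (deriv H) atTop (𝓝 0)) :
    Tendsto (backgroundPressure H) atTop (𝓝 0) := by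
  unfold backgroundPressure
  simpa using ((hH'.const_mul (-2)).sub ((hH.pow 2).const_mul 3)).div_const (8 * π)

lemma tendsto_comp_div_of_hasDerivWithinAt_Ici {α : Type*} {l : Filter α} {ρ : α → ℝ}
    {g : ℝ → ℝ} {d : ℝ} (hg : HasDerivWithinAt g d (Ici 0) 0) (hg0 : g 0 = 0)
    (hρ : Tendsto ρ l (𝓝[>] 0)) :
    Tendsto (fun x => g (ρ x) / ρ x) l (𝓝 d) := by
  have hslope : Tendsto (slope g 0) (𝓝[>] 0) (𝓝 d) :=
    (hasDerivWithinAt_iff_tendsto_slope' (lt_irrefl 0)).mp (hg.mono Ioi_subset_Ici_self)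
  simpa [slope_def_field, hg0, Function.comp_def] using hslope.comp hρ

/-- (Lemma 6.) In a Class 2 McVittie spacetime with sound-speed constant
`κ = (3/2)(1 + g'(0))`, the Hubble function satisfies `−H'(t)/H(t)² → κ` as `t → ∞`. -/
theorem class2_hubble_ratio_limit
    (κ : ℝ) (H g : ℝ → ℝ) (hclass : Class2 κ H g) :
    Tendsto (fun t => -deriv H t / (H t)^2) atTop (nhds κ) := by
  obtain ⟨⟨-, hpos, -, -⟩, hH, hH', -, hg, heos, rfl, -⟩ := hclass
  have hρ := tendsto_backgroundDensity hpos hH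
  have heos' : backgroundPressure H =ᶠ[atTop] fun t => g (backgroundDensity H t) :=
    (eventually_gt_atTop 0).mono heos
  have hg0 : g 0 = 0 :=
    tendsto_nhds_unique ((hg.continuousOn 0 self_mem_Ici).tendsto.comp
      (hρ.mono_right (nhdsWithin_mono _ Ioi_subset_Ici_self)))
      ((tendsto_backgroundPressure hH hH').congr' heos')
  have hratio := tendsto_comp_div_of_hasDerivWithinAt_Ici
    (hg.differentiableOn (by norm_num) 0 self_mem_Ici).hasDerivWithinAt hg0 hρ
  refine ((hratio.const_add 1).const_mul (3 / 2)).congr' ?_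
  filter_upwards [eventually_gt_atTop 0, heos'] with t ht hpt
  rw [neg_deriv_div_sq_eq (hpos t ht).ne', hpt]
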